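/- arXiv:2009.12532 — 5 statements merged into one kernel-verified Lean document; each statement's English description precedes it below -/
import Mathlib

section
/- Let Σ = {(x, P(x)) : x ∈ 𝕋ⁿ} be a C¹ Lagrangian graph in T*𝕋ⁿ, so that P(x) = c + d_x u(x) for some c ∈ ℝⁿ and u ∈ C²(𝕋ⁿ, ℝ). If Σ is invariant under the flow of ẋ = H_p, ṗ = -H_x - λp with λ > 0, then c = 0; i.e., every invariant Lagrangian graph of a conformally symplectic system is exact. -/
/-!
Along the flow, the tangent vector `(H_p, -H_x - λp)` at a point of the invariant graph of
`P = c + ∇u` must be tangent to the graph, i.e. `D²u · H_p = -H_x - λP`. Together with the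
symmetry of the Hessian `D²u`, this shows that `G(x) = λ u(x) + H(x, P(x))` has derivative
`-λ⟪c, ·⟫`. But `G` is `ℤⁿ`-periodic, so `λ⟪c, m⟫ = 0` for all `m ∈ ℤⁿ`, whence `c = 0`.
-/

open MeasureTheory Set Filter Topology

noncomputable section

abbrev V (n : ℕ) := EuclideanSpace ℝ (Fin n)

def intVec {n : ℕ} (m : Fin n → ℤ) : V n := WithLp.toLp 2 (fun i => (m i : ℝ))

open InnerProductSpace
open scoped RealInnerProductSpace Gradient

section

variable {E F : Type*} [NormedAddCommGroup E] [NormedAddCommGroup F]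

theorem HasFDerivAt.apply_eq_of_curve_on_graph [NormedSpace ℝ E] [NormedSpace ℝ F]
    {P : E → F} {P' : E →L[ℝ] F} {γ : ℝ → E × F} {t : ℝ} {a : E} {b : F}
    (hP : HasFDerivAt P P' (γ t).1) (hγ : HasDerivAt γ (a, b) t)
    (hgraph : ∀ s, (γ s).2 = P (γ s).1) : P' a = b := by
  have hfst : HasDerivAt (fun s => (γ s).1) a t :=
    (ContinuousLinearMap.fst ℝ E F).hasFDerivAt.comp_hasDerivAt t hγ
  have hsnd : HasDerivAt (fun s => (γ s).2) b t :=
    (ContinuousLinearMap.snd ℝ E F).hasFDerivAt.comp_hasDerivAt t hγ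
  rw [funext hgraph] at hsnd
  exact (hP.comp_hasDerivAt t hfst).unique hsnd

theorem map_eq_zero_of_forall_hasFDerivAt [NormedSpace ℝ E] [NormedSpace ℝ F]
    {f : E → F} {φ : E →L[ℝ] F} {a : E}
    (hf : ∀ x, HasFDerivAt f φ x) (hfa : f a = f 0) : φ a = 0 := by
  have hg : ∀ x, HasFDerivAt (fun x => f x - φ x) 0 x := fun x => by
    simpa using (hf x).fun_sub φ.hasFDerivAt
  have := is_const_of_fderiv_eq_zero (fun x => (hg x).differentiableAt)
    (fun x => (hg x).fderiv) a 0
  simpa [hfa] using this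

variable [InnerProductSpace ℝ E] [CompleteSpace E]

theorem inner_fderiv_gradient_apply {u : E → ℝ} {x : E} (v w : E) :
    ⟪fderiv ℝ (∇ u) x v, w⟫_ℝ = fderiv ℝ (fderiv ℝ u) x v w := by
  have : ∇ u = (toDual ℝ E).symm ∘ fderiv ℝ u := rfl
  rw [this, LinearIsometryEquiv.comp_fderiv]
  exact toDual_symm_apply

theorem ContDiffAt.inner_fderiv_gradient_comm {u : E → ℝ} {x : E} (hu : ContDiffAt ℝ 2 u x)
    (v w : E) : ⟪fderiv ℝ (∇ u) x v, w⟫_ℝ = ⟪fderiv ℝ (∇ u) x w, v⟫_ℝ := by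
  rw [inner_fderiv_gradient_apply, inner_fderiv_gradient_apply,
    hu.isSymmSndFDerivAt (by simp)]

theorem ContDiffAt.differentiableAt_gradient {u : E → ℝ} {x : E} (hu : ContDiffAt ℝ 2 u x) :
    DifferentiableAt ℝ (∇ u) x := by
  have : ∇ u = (toDual ℝ E).symm ∘ fderiv ℝ u := rfl
  rw [this]
  exact (toDual ℝ E).symm.differentiableAt.comp x
    ((hu.fderiv_right (m := 1) (by norm_num)).differentiableAt one_ne_zero)

theorem gradient_add_of_periodic {u : E → ℝ} {a : E} (hu : ∀ x, u (x + a) = u x) (x : E) :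
    ∇ u (x + a) = ∇ u x := by
  rw [gradient, gradient, ← fderiv_comp_add_right, funext hu]

theorem hasFDerivAt_discountedEnergy {lam : ℝ} {H : E × E → ℝ} {Hx Hp : E × E → E}
    (hH : Differentiable ℝ H) (hgrad : ∀ z u w, fderiv ℝ H z (u, w) = ⟪Hx z, u⟫_ℝ + ⟪Hp z, w⟫_ℝ)
    {u : E → ℝ} (hu : ContDiff ℝ 2 u) (c : E)
    (htangent : ∀ x, fderiv ℝ (∇ u) x (Hp (x, c + ∇ u x)) =
      -Hx (x, c + ∇ u x) - lam • (c + ∇ u x))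
    (x : E) :
    HasFDerivAt (fun x => lam * u x + H (x, c + ∇ u x)) (-lam • innerSL ℝ c) x := by
  have hP : HasFDerivAt (fun y => c + ∇ u y) (fderiv ℝ (∇ u) x) x :=
    hu.contDiffAt.differentiableAt_gradient.hasFDerivAt.const_add c
  have hG := ((hu.differentiable (by norm_num) x).hasFDerivAt.const_mul lam).add
    ((hH _).hasFDerivAt.comp x ((hasFDerivAt_id x).prodMk hP))
  refine hG.congr_fderiv (ContinuousLinearMap.ext fun w => ?_)
  simp only [id_eq, add_apply, smul_apply, ContinuousLinearMap.comp_apply,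
    ContinuousLinearMap.prod_apply, ContinuousLinearMap.id_apply, innerSL_apply_apply,
    smul_eq_mul, hgrad, ← inner_gradient_left]
  -- the symmetry of the Hessian `D(∇u)` is where the Lagrangian property enters
  rw [real_inner_comm (fderiv ℝ (∇ u) x w), hu.contDiffAt.inner_fderiv_gradient_comm, htangent,
    inner_sub_left, inner_neg_left, real_inner_smul_left, inner_add_left]
  ring

end

theorem intVec_single {n : ℕ} (i : Fin n) :
    intVec (Pi.single i 1) = EuclideanSpace.single i 1 := by
  ext j
  by_cases h : j = i
  · subst h; simp [intVec]
  · simp [intVec, h]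

theorem eq_zero_of_forall_inner_intVec_eq_zero {n : ℕ} {c : V n}
    (h : ∀ m, ⟪c, intVec m⟫_ℝ = 0) : c = 0 := by
  ext i
  simpa [intVec_single, EuclideanSpace.inner_single_right] using h (Pi.single i 1)

/-- Let `Σ = {(x, P(x))}` be a `C¹` Lagrangian graph in `T*𝕋ⁿ`, so that
`P(x) = c + dₓu(x)` for some `c ∈ ℝⁿ` and a `ℤⁿ`-periodic `u ∈ C²(𝕋ⁿ, ℝ)`.  If `Σ` is
invariant under the flow of `ẋ = H_p`, `ṗ = -H_x - λp` with `λ > 0`, then `c = 0`: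
every invariant Lagrangian graph of a conformally symplectic system is exact. -/
theorem stmt1 {n : ℕ} (lam : ℝ) (hlam : 0 < lam)
    (H : V n × V n → ℝ) (hH : ContDiff ℝ 2 H)
    (hHper : ∀ (x p : V n) (m : Fin n → ℤ), H (x + intVec m, p) = H (x, p))
    (Hx Hp : V n × V n → V n)
    (hgrad : ∀ z : V n × V n, ∀ u w : V n,
      fderiv ℝ H z (u, w) = (inner ℝ (Hx z) u : ℝ) + (inner ℝ (Hp z) w : ℝ))
    (Φ : ℝ → V n × V n → V n × V n)
    (hΦ0 : ∀ z, Φ 0 z = z)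
    (hODE : ∀ (t : ℝ) (z : V n × V n), HasDerivAt (fun s => Φ s z)
      (Hp (Φ t z), -Hx (Φ t z) - lam • (Φ t z).2) t)
    -- the Lagrangian graph `Σ = Graph(P)`, `P = c + du` with `u` periodic and `C²`
    (u : V n → ℝ) (hu : ContDiff ℝ 2 u)
    (huper : ∀ (x : V n) (m : Fin n → ℤ), u (x + intVec m) = u x)
    (c : V n) (P : V n → V n) (hP : ∀ x, P x = c + gradient u x)
    -- invariance of the graph of `P` under the flow
    (hinv : ∀ (t : ℝ) (x : V n), ∃ y : V n, Φ t (x, P x) = (y, P y)) :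
    c = 0 := by
  obtain rfl : P = fun x => c + ∇ u x := funext hP
  beta_reduce at hinv
  have htangent : ∀ x, fderiv ℝ (∇ u) x (Hp (x, c + ∇ u x)) =
      -Hx (x, c + ∇ u x) - lam • (c + ∇ u x) := by
    intro x
    have hγ := hODE 0 (x, c + ∇ u x)
    rw [hΦ0] at hγ
    have hP' : HasFDerivAt (fun y => c + ∇ u y) (fderiv ℝ (∇ u) x) (Φ 0 (x, c + ∇ u x)).1 := by
      rw [hΦ0]
      exact hu.contDiffAt.differentiableAt_gradient.hasFDerivAt.const_add c
    refine hP'.apply_eq_of_curve_on_graph hγ fun t => ?_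
    obtain ⟨y, hy⟩ := hinv t x
    rw [hy]
  have hG := hasFDerivAt_discountedEnergy (hH.differentiable (by norm_num)) hgrad hu c htangent
  refine eq_zero_of_forall_inner_intVec_eq_zero fun m => ?_
  have hGper : lam * u (intVec m) + H (intVec m, c + ∇ u (intVec m)) =
      lam * u 0 + H (0, c + ∇ u 0) := by
    have hgrad_m : ∇ u (intVec m) = ∇ u 0 := by
      simpa using gradient_add_of_periodic (huper · m) 0
    rw [hgrad_m]
    simpa using congrArg₂ (lam * · + ·) (huper 0 m) (hHper 0 (c + ∇ u 0) m)
  simpa [hlam.ne'] using map_eq_zero_of_forall_hasFDerivAt hG hGper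
end
end

section
/- Suppose K : 𝕋ⁿ → T*𝕋ⁿ is a C¹ embedding conjugating the rotation flow ρ_ω^t(x) = x + ωt to the conformally symplectic flow Φᵗ (i.e., Φᵗ ∘ K = K ∘ ρ_ω^t for all t ∈ ℝ), where (Φᵗ)*Ω = e^{λt}Ω with λ > 0 and Ω the standard symplectic form. Then K*Ω = 0, i.e., the KAM torus K(𝕋ⁿ) is Lagrangian. -/
open MeasureTheory Set Filter Topology

noncomputable section

/-- standard symplectic form `Ω = dp ∧ dx` on `T*𝕋ⁿ`. -/
def symp {n : ℕ} (a b : V n × V n) : ℝ := (inner ℝ a.2 b.1 : ℝ) - (inner ℝ b.2 a.1 : ℝ)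

/-! The function `f y = Ω(DK(y) u, DK(y) v)` is continuous and `ℤⁿ`-periodic, hence bounded.
Differentiating the conjugacy `Φᵗ ∘ K = K ∘ ρ_ω^t` and using `(Φᵗ)*Ω = e^{λt} Ω` gives
`f (y + t ω) = e^{λt} f y`, which stays bounded as `t → ∞` only if `f y = 0`. -/

open Metric

section Translation

variable {E F : Type*} [NormedAddCommGroup E] [NormedSpace ℝ E]
  [NormedAddCommGroup F] [NormedSpace ℝ F]

theorem fderiv_add_eq_comp_of_semiconj {K : E → F} {Φ : F → F} {Φ' : F →L[ℝ] F} {a y : E}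
    (hK : DifferentiableAt ℝ K y) (hΦ : HasFDerivAt Φ Φ' (K y))
    (h : ∀ x, Φ (K x) = K (x + a)) :
    fderiv ℝ K (y + a) = Φ'.comp (fderiv ℝ K y) := by
  rw [← fderiv_comp_add_right, ← funext h]
  exact (hΦ.comp y hK.hasFDerivAt).fderiv

theorem fderiv_add_eq_of_add_eq_add_const {K : E → F} {a : E} {b : F}
    (h : ∀ x, K (x + a) = K x + b) (y : E) :
    fderiv ℝ K (y + a) = fderiv ℝ K y := by
  rw [← fderiv_comp_add_right, funext h, fderiv_add_const]

end Translation

theorem Continuous.symp {X : Type*} [TopologicalSpace X] {n : ℕ} {f g : X → V n × V n}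
    (hf : Continuous f) (hg : Continuous g) : Continuous fun x => symp (f x) (g x) :=
  (hf.snd.inner hg.fst).sub (hg.snd.inner hf.fst)

theorem exists_sub_intVec_mem_closedBall {n : ℕ} (y : V n) :
    ∃ m : Fin n → ℤ, y - intVec m ∈ closedBall 0 √n := by
  refine ⟨fun i => ⌊y i⌋, ?_⟩
  have hfract : ∀ i, (y - intVec fun i => ⌊y i⌋) i = Int.fract (y i) := fun i => by
    simp [intVec]
  rw [mem_closedBall, dist_zero_right, EuclideanSpace.norm_eq]
  calc √(∑ i, ‖(y - intVec fun i => ⌊y i⌋) i‖ ^ 2) ≤ √(∑ _i : Fin n, 1) := by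
        gcongr with i
        rw [hfract, Real.norm_of_nonneg (Int.fract_nonneg _)]
        exact pow_le_one₀ (Int.fract_nonneg _) (Int.fract_lt_one _).le
    _ = √n := by simp

theorem Continuous.exists_norm_le_of_intVec_periodic {n : ℕ} {F : Type*} [NormedAddCommGroup F]
    {f : V n → F} (hf : Continuous f) (hper : ∀ y m, f (y + intVec m) = f y) :
    ∃ C, ∀ y, ‖f y‖ ≤ C := by
  obtain ⟨C, hC⟩ := (isCompact_closedBall (0 : V n) √n).exists_bound_of_continuousOn
    hf.continuousOn
  refine ⟨C, fun y => ?_⟩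
  obtain ⟨m, hm⟩ := exists_sub_intVec_mem_closedBall y
  rw [← sub_add_cancel y (intVec m), hper]
  exact hC _ hm

theorem eq_zero_of_forall_exp_mul_le {lam a C : ℝ} (hlam : 0 < lam)
    (h : ∀ t, Real.exp (lam * t) * |a| ≤ C) : a = 0 := by
  by_contra ha
  have hgrow : Tendsto (fun t => Real.exp (lam * t) * |a|) atTop atTop :=
    (Real.tendsto_exp_atTop.comp (tendsto_id.const_mul_atTop hlam)).atTop_mul_const
      (abs_pos.mpr ha)
  obtain ⟨t, ht⟩ := (hgrow.eventually_gt_atTop C).exists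
  exact (h t).not_gt ht

theorem stmt2_general {n : ℕ} (lam : ℝ) (hlam : 0 < lam) (ω : V n)
    (Φ : ℝ → V n × V n → V n × V n)
    (DΦ : ℝ → V n × V n → (V n × V n) →L[ℝ] (V n × V n))
    (hDΦ : ∀ (t : ℝ) (z : V n × V n), HasFDerivAt (Φ t) (DΦ t z) z)
    -- the conformally symplectic property `(Φᵗ)*Ω = e^{λt} Ω`
    (hconf : ∀ (t : ℝ) (z : V n × V n) (u v : V n × V n),
      symp (DΦ t z u) (DΦ t z v) = Real.exp (lam * t) * symp u v)
    -- `K` is a C¹ embedding of the torus (lifted to ℝⁿ)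
    (K : V n → V n × V n) (hK : ContDiff ℝ 1 K)
    (hKper : ∀ (x : V n) (m : Fin n → ℤ),
      K (x + intVec m) = ((K x).1 + intVec m, (K x).2))
    -- the conjugacy `Φᵗ ∘ K = K ∘ ρ_ω^t`
    (hconj : ∀ (t : ℝ) (x : V n), Φ t (K x) = K (x + t • ω)) :
    ∀ (x : V n) (u v : V n), symp (fderiv ℝ K x u) (fderiv ℝ K x v) = 0 := by
  intro x u v
  set f : V n → ℝ := fun y => symp (fderiv ℝ K y u) (fderiv ℝ K y v) with hf
  have hgrowth : ∀ t y, f (y + t • ω) = Real.exp (lam * t) * f y := fun t y => by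
    simp only [hf, fderiv_add_eq_comp_of_semiconj (hK.differentiable one_ne_zero y)
      (hDΦ t (K y)) (hconj t), ContinuousLinearMap.comp_apply, hconf]
  have hper : ∀ y m, f (y + intVec m) = f y := fun y m => by
    have hKtrans : ∀ x, K (x + intVec m) = K x + (intVec m, 0) := fun x => by
      rw [hKper]; exact Prod.ext rfl (add_zero _).symm
    simp only [hf, fderiv_add_eq_of_add_eq_add_const hKtrans]
  have hfc : Continuous f :=
    have hDK := hK.continuous_fderiv one_ne_zero
    (hDK.clm_apply continuous_const).symp (hDK.clm_apply continuous_const)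
  obtain ⟨C, hC⟩ := hfc.exists_norm_le_of_intVec_periodic hper
  refine eq_zero_of_forall_exp_mul_le (a := f x) (C := C) hlam fun t => ?_
  have hCt := hC (x + t • ω)
  rwa [hgrowth, Real.norm_eq_abs, abs_mul, abs_of_pos (Real.exp_pos _)] at hCt

/-- If `K : 𝕋ⁿ → T*𝕋ⁿ` is a `C¹` embedding conjugating the rotation flow
`ρ_ω^t(x) = x + ωt` to a flow `Φᵗ` satisfying `(Φᵗ)*Ω = e^{λt}Ω` with `λ > 0`, then
`K*Ω = 0`: the KAM torus `K(𝕋ⁿ)` is Lagrangian. -/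
theorem stmt2 {n : ℕ} (lam : ℝ) (hlam : 0 < lam) (ω : V n)
    (Φ : ℝ → V n × V n → V n × V n)
    (DΦ : ℝ → V n × V n → (V n × V n) →L[ℝ] (V n × V n))
    (hDΦ : ∀ (t : ℝ) (z : V n × V n), HasFDerivAt (Φ t) (DΦ t z) z)
    -- the conformally symplectic property `(Φᵗ)*Ω = e^{λt} Ω`
    (hconf : ∀ (t : ℝ) (z : V n × V n) (u v : V n × V n),
      symp (DΦ t z u) (DΦ t z v) = Real.exp (lam * t) * symp u v)
    -- `K` is a C¹ embedding of the torus (lifted to ℝⁿ)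
    (K : V n → V n × V n) (hK : ContDiff ℝ 1 K) (hKinj : Function.Injective K)
    (hKper : ∀ (x : V n) (m : Fin n → ℤ),
      K (x + intVec m) = ((K x).1 + intVec m, (K x).2))
    -- the conjugacy `Φᵗ ∘ K = K ∘ ρ_ω^t`
    (hconj : ∀ (t : ℝ) (x : V n), Φ t (K x) = K (x + t • ω)) :
    ∀ (x : V n) (u v : V n), symp (fderiv ℝ K x u) (fderiv ℝ K x v) = 0 :=
  stmt2_general lam hlam ω Φ DΦ hDΦ hconf K hK hKper hconj
end
end

section
/- Let a 2-form β on 𝕋ⁿ with continuous coefficients satisfy (ρ_ω^{-t})*β = e^{-λt}β for all t ≥ 0, where ρ_ω^t is the rotation flow by ω ∈ ℝⁿ and λ > 0. Then β = 0. -/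
open MeasureTheory Set Filter Topology

noncomputable section

/-!
Translation by an integer vector does not change `β`, so `β` is bounded, say by `M`, being
continuous on the compact unit cube, which meets every orbit of `ℤⁿ`. Flowing forward for time
`t` then gives `‖β x‖ = e^{-λt} ‖β (x + tω)‖ ≤ e^{-λt} M`, and `t → ∞` forces `β x = 0`.
-/

def unitCube (n : ℕ) : Set (V n) := WithLp.toLp 2 '' univ.pi fun _ => Icc 0 1

theorem isCompact_unitCube (n : ℕ) : IsCompact (unitCube n) :=
  (isCompact_univ_pi fun _ => isCompact_Icc).image (PiLp.continuous_toLp 2 _)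

theorem exists_mem_unitCube_add_intVec {n : ℕ} (z : V n) :
    ∃ y ∈ unitCube n, ∃ m : Fin n → ℤ, z = y + intVec m := by
  refine ⟨WithLp.toLp 2 fun i => Int.fract (z i), ⟨_, fun i _ => ?_, rfl⟩, fun i => ⌊z i⌋, ?_⟩
  · exact ⟨Int.fract_nonneg _, (Int.fract_lt_one _).le⟩
  · ext i
    simp [intVec, Int.fract_add_floor]

theorem exists_norm_le_of_continuous_of_intVec_periodic {n : ℕ} {E : Type*}
    [SeminormedAddCommGroup E] {f : V n → E} (hf : Continuous f)
    (hper : ∀ x m, f (x + intVec m) = f x) : ∃ M, ∀ x, ‖f x‖ ≤ M := by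
  obtain ⟨M, hM⟩ := (isCompact_unitCube n).exists_bound_of_continuousOn hf.continuousOn
  refine ⟨M, fun z => ?_⟩
  obtain ⟨y, hy, m, rfl⟩ := exists_mem_unitCube_add_intVec z
  rw [hper]
  exact hM y hy

theorem eq_zero_of_bounded_of_map_sub_smul_eq_exp_smul {X E : Type*} [AddCommGroup X]
    [Module ℝ X] [NormedAddCommGroup E] [NormedSpace ℝ E] {f : X → E} {lam M : ℝ}
    (hlam : 0 < lam) (ω : X) (hM : ∀ y, ‖f y‖ ≤ M)
    (hf : ∀ t : ℝ, 0 ≤ t → ∀ x, f (x - t • ω) = Real.exp (-(lam * t)) • f x) (x : X) :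
    f x = 0 := by
  have hdecay : ∀ t : ℝ, 0 ≤ t → ‖f x‖ ≤ Real.exp (-(lam * t)) * M := by
    intro t ht
    rw [← add_sub_cancel_right x (t • ω), hf t ht, norm_smul, Real.norm_of_nonneg (by positivity)]
    gcongr
    exact hM _
  have hlim : Tendsto (fun t : ℝ => Real.exp (-(lam * t)) * M) atTop (𝓝 0) := by
    simpa using (Real.tendsto_exp_neg_atTop_nhds_zero.comp
      (tendsto_id.const_mul_atTop hlam)).mul_const M
  exact norm_le_zero_iff.mp (ge_of_tendsto hlim (eventually_ge_atTop 0 |>.mono hdecay))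

theorem stmt3_general {n : ℕ} (lam : ℝ) (hlam : 0 < lam) (ω : V n)
    (β : V n → (V n →L[ℝ] V n →L[ℝ] ℝ))
    (hβcont : Continuous β)
    (hβper : ∀ (x : V n) (m : Fin n → ℤ), β (x + intVec m) = β x)
    (hpull : ∀ t : ℝ, 0 ≤ t → ∀ x : V n, β (x - t • ω) = Real.exp (-(lam * t)) • β x) :
    ∀ x : V n, β x = 0 := by
  obtain ⟨M, hM⟩ := exists_norm_le_of_continuous_of_intVec_periodic hβcont hβper
  exact eq_zero_of_bounded_of_map_sub_smul_eq_exp_smul (f := β) hlam ω hM hpull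

/-- Let `β` be a continuous 2-form on `𝕋ⁿ` (a continuous, periodic family
of alternating bilinear forms) satisfying `(ρ_ω^{-t})*β = e^{-λt}β` for all `t ≥ 0`, where
`ρ_ω^t` is the rotation flow by `ω` and `λ > 0`.  Then `β = 0`.
(Since the differential of a translation is the identity, the pullback condition reads
`β(x - tω) = e^{-λt} β(x)`.) -/
theorem stmt3 {n : ℕ} (lam : ℝ) (hlam : 0 < lam) (ω : V n)
    (β : V n → (V n →L[ℝ] V n →L[ℝ] ℝ))
    (hβcont : Continuous β)
    (hβper : ∀ (x : V n) (m : Fin n → ℤ), β (x + intVec m) = β x)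
    (hβalt : ∀ (x : V n) (u : V n), β x u u = 0)
    (hpull : ∀ t : ℝ, 0 ≤ t → ∀ x : V n, β (x - t • ω) = Real.exp (-(lam * t)) • β x) :
    ∀ x : V n, β x = 0 :=
  stmt3_general lam hlam ω β hβcont hβper hpull
end
end

section
/- Let L be a Tonelli Lagrangian on 𝕋ⁿ, λ > 0, and let u⁻ be the value function u⁻(x) = inf_{γ(0)=x} ∫_{-∞}^0 e^{λτ} L(γ,γ̇) dτ. Let U_ψ(x,t) = (T_t⁻ψ)(x) be the Lax–Oleinik evolution of ψ ∈ C(𝕋ⁿ,ℝ). Then there is a constant C₁ depending only on ‖ψ‖_∞, λ, min L, and max_x |L(x,0)| such that ‖U_ψ(·,t) - u⁻‖_∞ ≤ C₁ e^{-λt} for all t ≥ 1. In particular T_t⁻ψ → u⁻ uniformly, with exponential rate λ, independently of ψ. -/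
open MeasureTheory Set Filter Topology intervalIntegral

noncomputable section

def curveFrom {n : ℕ} (x : V n) (g : ℝ → V n) : ℝ → V n :=
  fun τ => x + ∫ s in (0:ℝ)..τ, g s

/-- discounted Lax–Oleinik semigroup `U_ψ(x,t) = (T_t⁻ψ)(x)`. -/
def lax {n : ℕ} (L : V n → V n → ℝ) (lam : ℝ) (ψ : V n → ℝ) (t : ℝ) (x : V n) : ℝ :=
  sInf { a | ∃ g : ℝ → V n, IntervalIntegrable g volume (-t) 0 ∧
    IntervalIntegrable (fun τ => Real.exp (lam * τ) * L (curveFrom x g τ) (g τ))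
      volume (-t) 0 ∧
    a = Real.exp (-(lam * t)) * ψ (curveFrom x g (-t)) +
      ∫ τ in (-t)..0, Real.exp (lam * τ) * L (curveFrom x g τ) (g τ) }

/-- discounted value function `u⁻`. -/
def uminus {n : ℕ} (L : V n → V n → ℝ) (lam : ℝ) (x : V n) : ℝ :=
  sInf { a | ∃ g : ℝ → V n, (∀ T : ℝ, IntervalIntegrable g volume (-T) 0) ∧
    IntegrableOn (fun τ => Real.exp (lam * τ) * L (curveFrom x g τ) (g τ)) (Set.Iic 0)
      volume ∧
    a = ∫ τ in Set.Iic (0:ℝ), Real.exp (lam * τ) * L (curveFrom x g τ) (g τ) }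

/-!
Both values are infima of discounted actions, and competitors can be transferred between them.
The restriction to `[-t, 0]` of a curve admissible for `u⁻` is admissible for `T_t⁻ψ`, and a curve
admissible for `T_t⁻ψ`, extended by the constant curve `γ(-t)` on `(-∞, -t]`, is admissible for
`u⁻`. In both directions the two actions differ by `e^{-λt} ψ(γ(-t))` and a tail
`∫_{-∞}^{-t} e^{λτ} L(γ, γ̇) dτ`, each of size `O(e^{-λt})` because `ψ` and `L(·, 0)` are bounded
and `L` is bounded below. The lower bound on `L` comes from periodicity in `x`, convexity and
superlinearity in `v`.
-/

theorem ConvexOn.apply_zero_le_of_le_on_sphere {E : Type*} [NormedAddCommGroup E]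
    [NormedSpace ℝ E] {f : E → ℝ} (hf : ConvexOn ℝ univ f) {r : ℝ} (hr : 0 < r)
    (hsphere : ∀ w, ‖w‖ = r → f 0 ≤ f w) {v : E} (hv : r ≤ ‖v‖) : f 0 ≤ f v := by
  set θ := r / ‖v‖
  have hvpos : 0 < ‖v‖ := hr.trans_le hv
  have hθpos : 0 < θ := by positivity
  have hθle : θ ≤ 1 := (div_le_one hvpos).2 hv
  have hconv : f (θ • v) ≤ (1 - θ) * f 0 + θ * f v := by
    simpa using hf.2 (mem_univ 0) (mem_univ v) (sub_nonneg.2 hθle) hθpos.le (by ring)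
  have hθv : f 0 ≤ f (θ • v) := hsphere _ (by
    rw [norm_smul, Real.norm_of_nonneg hθpos.le, div_mul_cancel₀ _ hvpos.ne'])
  nlinarith

section LowerBound

variable {X E : Type*} [TopologicalSpace X] [NormedAddCommGroup E] [NormedSpace ℝ E]
  [ProperSpace E] {L : X → E → ℝ}

theorem exists_eventually_forall_le_of_convexOn (hL : Continuous (Function.uncurry L))
    (hconv : ∀ x, ConvexOn ℝ univ (L x))
    (hcoercive : ∀ x, ∃ R, ∀ v, R ≤ ‖v‖ → ‖v‖ ≤ L x v) (x₀ : X) :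
    ∃ m, ∀ᶠ x in 𝓝 x₀, ∀ v, m ≤ L x v := by
  obtain ⟨R, hR⟩ := hcoercive x₀
  -- On the sphere of radius `r`, `L x₀ ≥ L x₀ 0 + 2`. For `x` near `x₀`, `L x` is within `1` of
  -- `L x₀` on the closed ball, so `L x` still exceeds `L x 0` on the sphere and, by convexity,
  -- outside the ball.
  set r := max R (|L x₀ 0| + 2)
  have hr : 0 < r := lt_max_of_lt_right (by positivity)
  obtain ⟨b, hb⟩ := (isCompact_closedBall (0 : E) r).bddBelow_image
    (hL.comp (Continuous.prodMk_right x₀)).continuousOn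
  have hclose : ∀ᶠ x in 𝓝 x₀, ∀ v ∈ Metric.closedBall (0 : E) r, |L x v - L x₀ v| < 1 := by
    have hdiff : Continuous fun z : X × E => L z.1 z.2 - L x₀ z.2 :=
      hL.sub (hL.comp ((Continuous.prodMk_right x₀).comp continuous_snd))
    exact (isCompact_closedBall _ _).eventually_forall_of_forall_eventually fun v _ =>
      (hdiff.continuousAt.eventually_mem (Metric.ball_mem_nhds _ one_pos)).mono
        fun _ h => by simpa [Real.dist_eq] using h
  refine ⟨b - 1, hclose.mono fun x hx v => ?_⟩
  have hball : ∀ w : E, ‖w‖ ≤ r → b - 1 ≤ L x w := fun w hw => by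
    have hbw : b ≤ L x₀ w := hb ⟨w, by simpa using hw, rfl⟩
    linarith [(abs_lt.1 (hx w (by simpa using hw))).1]
  rcases le_total ‖v‖ r with hv | hv
  · exact hball v hv
  · refine (hball 0 (by simpa using hr.le)).trans
      ((hconv x).apply_zero_le_of_le_on_sphere hr (fun w hw => ?_) hv)
    have hRw : ‖w‖ ≤ L x₀ w := hR w (hw ▸ le_max_left _ _)
    have h0 := abs_lt.1 (hx 0 (by simpa using hr.le))
    have hxw := abs_lt.1 (hx w (by simpa using hw.le))
    linarith [le_abs_self (L x₀ 0), le_max_right R (|L x₀ 0| + 2)]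

theorem IsCompact.exists_forall_le_of_convexOn {K : Set X} (hK : IsCompact K)
    (hL : Continuous (Function.uncurry L)) (hconv : ∀ x, ConvexOn ℝ univ (L x))
    (hcoercive : ∀ x, ∃ R, ∀ v, R ≤ ‖v‖ → ‖v‖ ≤ L x v) :
    ∃ m, ∀ x ∈ K, ∀ v, m ≤ L x v := by
  refine hK.induction_on ⟨0, by simp⟩ (fun s t hst ⟨m, hm⟩ => ⟨m, fun x hx => hm x (hst hx)⟩)
    (fun s t ⟨m, hm⟩ ⟨m', hm'⟩ => ⟨min m m', ?_⟩) (fun x₀ _ => ?_)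
  · rintro x (hx | hx) v
    exacts [min_le_of_left_le (hm x hx v), min_le_of_right_le (hm' x hx v)]
  · obtain ⟨m, hm⟩ := exists_eventually_forall_le_of_convexOn hL hconv hcoercive x₀
    exact ⟨_, mem_nhdsWithin_of_mem_nhds hm, m, fun x hx => hx⟩

end LowerBound

def IntPeriodic {n : ℕ} {α : Type*} (f : V n → α) : Prop :=
  ∀ (x : V n) (m : Fin n → ℤ), f (x + intVec m) = f x

theorem exists_eq_add_intVec_norm_le {n : ℕ} (x : V n) :
    ∃ y : V n, ‖y‖ ≤ √n ∧ ∃ m : Fin n → ℤ, x = y + intVec m := by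
  refine ⟨WithLp.toLp 2 fun i => Int.fract (x i), ?_, fun i => ⌊x i⌋, ?_⟩
  · rw [EuclideanSpace.norm_eq]
    refine Real.sqrt_le_sqrt ?_
    calc ∑ i, ‖Int.fract (x i)‖ ^ 2 ≤ ∑ _i : Fin n, (1 : ℝ) :=
          Finset.sum_le_sum fun i _ => by
            rw [Real.norm_eq_abs, sq_abs]
            exact pow_le_one₀ (Int.fract_nonneg _) (Int.fract_lt_one _).le
      _ = n := by simp
  · ext i
    simp [intVec, Int.fract_add_floor]

theorem IntPeriodic.range_subset_image_closedBall {n : ℕ} {α : Type*} {f : V n → α}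
    (hf : IntPeriodic f) : range f ⊆ f '' Metric.closedBall 0 √n := by
  rintro _ ⟨x, rfl⟩
  obtain ⟨y, hy, m, rfl⟩ := exists_eq_add_intVec_norm_le x
  exact ⟨y, by simpa using hy, (hf y m).symm⟩

theorem IntPeriodic.exists_abs_le {n : ℕ} {f : V n → ℝ} (hf : IntPeriodic f)
    (hc : Continuous f) : ∃ M, ∀ x, |f x| ≤ M := by
  obtain ⟨M, hM⟩ := (isCompact_closedBall (0 : V n) √n).exists_bound_of_continuousOn
    hc.continuousOn
  refine ⟨M, fun x => ?_⟩
  obtain ⟨y, hy, hyx⟩ := hf.range_subset_image_closedBall (mem_range_self x)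
  simpa [← hyx] using hM y hy

theorem IntPeriodic.exists_forall_le_of_convexOn {n : ℕ} {L : V n → V n → ℝ}
    (hper : IntPeriodic L) (hL : Continuous (Function.uncurry L))
    (hconv : ∀ x, ConvexOn ℝ univ (L x))
    (hcoercive : ∀ x, ∃ R, ∀ v, R ≤ ‖v‖ → ‖v‖ ≤ L x v) :
    ∃ m, ∀ x v, m ≤ L x v := by
  obtain ⟨m, hm⟩ := (isCompact_closedBall (0 : V n) √n).exists_forall_le_of_convexOn
    hL hconv hcoercive
  refine ⟨m, fun x v => ?_⟩
  obtain ⟨y, hy, hyx⟩ := hper.range_subset_image_closedBall (mem_range_self x)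
  exact hyx ▸ hm y hy v

theorem csInf_le_csInf_add_of_forall_exists_le {S T : Set ℝ} (hT : T.Nonempty)
    (hS : BddBelow S) {c : ℝ} (h : ∀ a ∈ T, ∃ b ∈ S, b ≤ a + c) : sInf S ≤ sInf T + c := by
  rw [← sub_le_iff_le_add]
  refine le_csInf hT fun a ha => ?_
  obtain ⟨b, hb, hba⟩ := h a ha
  linarith [csInf_le hS hb]

theorem neg_div_le_setIntegral_of_neg_mul_exp_le {lam M b : ℝ} {f : ℝ → ℝ} {s : Set ℝ}
    (hlam : 0 < lam) (hM : 0 ≤ M) (hs : s ⊆ Iic b) (hf : IntegrableOn f s)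
    (hlb : ∀ τ, -M * Real.exp (lam * τ) ≤ f τ) :
    -(M * Real.exp (lam * b) / lam) ≤ ∫ τ in s, f τ := by
  have hexp : IntegrableOn (fun τ => Real.exp (lam * τ)) (Iic b) := integrableOn_exp_mul_Iic hlam b
  calc -(M * Real.exp (lam * b) / lam) = -M * ∫ τ in Iic b, Real.exp (lam * τ) := by
        rw [integral_exp_mul_Iic hlam]; ring
    _ ≤ -M * ∫ τ in s, Real.exp (lam * τ) :=
        mul_le_mul_of_nonpos_left (setIntegral_mono_set hexp
          (.of_forall fun _ => (Real.exp_pos _).le) hs.eventuallyLE) (neg_nonpos.2 hM)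
    _ = ∫ τ in s, -M * Real.exp (lam * τ) := (MeasureTheory.integral_const_mul _ _).symm
    _ ≤ ∫ τ in s, f τ := integral_mono ((hexp.mono_set hs).const_mul _) hf hlb

theorem curveFrom_indicator_Ioc {n : ℕ} {a τ : ℝ} (ha : a ≤ 0) (hτ : τ ≤ 0) (x : V n)
    (g : ℝ → V n) : curveFrom x ((Ioc a 0).indicator g) τ = curveFrom x g (max a τ) := by
  simp only [curveFrom, intervalIntegral.integral_of_ge hτ,
    intervalIntegral.integral_of_ge (max_le ha hτ), setIntegral_indicator measurableSet_Ioc,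
    Ioc_inter_Ioc, max_comm τ a, min_self]

@[simp]
theorem curveFrom_zero {n : ℕ} (x : V n) (τ : ℝ) : curveFrom x 0 τ = x := by
  simp [curveFrom]

section Discounted

variable {n : ℕ} (L : V n → V n → ℝ) (lam : ℝ)

def discountedIntegrand (x : V n) (g : ℝ → V n) (τ : ℝ) : ℝ :=
  Real.exp (lam * τ) * L (curveFrom x g τ) (g τ)

def laxValues (ψ : V n → ℝ) (t : ℝ) (x : V n) : Set ℝ :=
  { a | ∃ g : ℝ → V n, IntervalIntegrable g volume (-t) 0 ∧
    IntervalIntegrable (discountedIntegrand L lam x g) volume (-t) 0 ∧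
    a = Real.exp (-(lam * t)) * ψ (curveFrom x g (-t)) +
      ∫ τ in (-t)..0, discountedIntegrand L lam x g τ }

def uminusValues (x : V n) : Set ℝ :=
  { a | ∃ g : ℝ → V n, (∀ T : ℝ, IntervalIntegrable g volume (-T) 0) ∧
    IntegrableOn (discountedIntegrand L lam x g) (Iic 0) ∧
    a = ∫ τ in Iic 0, discountedIntegrand L lam x g τ }

theorem lax_eq_sInf_laxValues (ψ : V n → ℝ) (t : ℝ) (x : V n) :
    lax L lam ψ t x = sInf (laxValues L lam ψ t x) := rfl

theorem uminus_eq_sInf_uminusValues (x : V n) :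
    uminus L lam x = sInf (uminusValues L lam x) := rfl

variable {L lam}

theorem discountedIntegrand_indicator_Ioc_of_le {t τ : ℝ} (ht : 0 ≤ t) (hτ : τ ≤ -t)
    (x : V n) (g : ℝ → V n) :
    discountedIntegrand L lam x ((Ioc (-t) 0).indicator g) τ =
      Real.exp (lam * τ) * L (curveFrom x g (-t)) 0 := by
  rw [discountedIntegrand, curveFrom_indicator_Ioc (neg_nonpos.2 ht) (hτ.trans (by linarith)),
    max_eq_left hτ, indicator_of_notMem fun h => (not_lt.2 hτ) h.1]

theorem discountedIntegrand_indicator_Ioc_of_mem {t τ : ℝ} (hτ : τ ∈ Ioc (-t) 0)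
    (x : V n) (g : ℝ → V n) :
    discountedIntegrand L lam x ((Ioc (-t) 0).indicator g) τ = discountedIntegrand L lam x g τ := by
  rw [discountedIntegrand, curveFrom_indicator_Ioc (hτ.1.le.trans hτ.2) hτ.2,
    max_eq_right hτ.1.le, indicator_of_mem hτ, discountedIntegrand]

theorem discountedIntegrand_zero (x : V n) :
    discountedIntegrand L lam x 0 = fun τ => Real.exp (lam * τ) * L x 0 := by
  ext τ
  simp [discountedIntegrand]

theorem laxValues_nonempty (ψ : V n → ℝ) (t : ℝ) (x : V n) :
    (laxValues L lam ψ t x).Nonempty :=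
  ⟨_, 0, intervalIntegrable_const, by
    rw [discountedIntegrand_zero]
    exact ((Real.continuous_exp.comp (continuous_const_mul lam)).mul continuous_const
      |>.intervalIntegrable (-t) 0), rfl⟩

theorem uminusValues_nonempty (hlam : 0 < lam) (x : V n) : (uminusValues L lam x).Nonempty :=
  ⟨_, 0, fun _ => intervalIntegrable_const, by
    rw [discountedIntegrand_zero]
    exact (integrableOn_exp_mul_Iic hlam 0).mul_const (L x 0), rfl⟩

variable {M : ℝ}

theorem neg_mul_exp_le_discountedIntegrand (hLlb : ∀ y v, -M ≤ L y v) (x : V n)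
    (g : ℝ → V n) (τ : ℝ) : -M * Real.exp (lam * τ) ≤ discountedIntegrand L lam x g τ := by
  have := mul_le_mul_of_nonneg_left (hLlb (curveFrom x g τ) (g τ)) (Real.exp_pos (lam * τ)).le
  rw [discountedIntegrand]
  linarith

theorem bddBelow_uminusValues (hlam : 0 < lam) (hM : 0 ≤ M) (hLlb : ∀ y v, -M ≤ L y v)
    (x : V n) : BddBelow (uminusValues L lam x) := by
  refine ⟨-(M * Real.exp (lam * 0) / lam), ?_⟩
  rintro _ ⟨g, -, hint, rfl⟩
  exact neg_div_le_setIntegral_of_neg_mul_exp_le hlam hM subset_rfl hint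
    (neg_mul_exp_le_discountedIntegrand hLlb x g)

theorem bddBelow_laxValues (hlam : 0 < lam) (hM : 0 ≤ M) (hLlb : ∀ y v, -M ≤ L y v)
    {ψ : V n → ℝ} (hψ : ∀ y, -M ≤ ψ y) {t : ℝ} (ht : 0 ≤ t) (x : V n) :
    BddBelow (laxValues L lam ψ t x) := by
  refine ⟨-M - M * Real.exp (lam * 0) / lam, ?_⟩
  rintro _ ⟨g, -, hint, rfl⟩
  have hmt : -t ≤ 0 := neg_nonpos.2 ht
  have hψ' : -M ≤ Real.exp (-(lam * t)) * ψ (curveFrom x g (-t)) := by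
    have he : Real.exp (-(lam * t)) ≤ 1 := Real.exp_le_one_iff.2 (by nlinarith)
    nlinarith [hψ (curveFrom x g (-t)), Real.exp_pos (-(lam * t))]
  have hint' := neg_div_le_setIntegral_of_neg_mul_exp_le hlam hM Ioc_subset_Iic_self
    ((intervalIntegrable_iff_integrableOn_Ioc_of_le hmt).1 hint)
    (neg_mul_exp_le_discountedIntegrand hLlb x g)
  rw [← intervalIntegral.integral_of_le hmt] at hint'
  linarith

theorem exists_laxValues_le (hlam : 0 < lam) (hM : 0 ≤ M) (hLlb : ∀ y v, -M ≤ L y v)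
    {ψ : V n → ℝ} (hψ : ∀ y, ψ y ≤ M) {t : ℝ} (ht : 0 ≤ t) (x : V n) :
    ∀ a ∈ uminusValues L lam x, ∃ b ∈ laxValues L lam ψ t x,
      b ≤ a + (M + M / lam) * Real.exp (-(lam * t)) := by
  rintro _ ⟨g, hg, hint, rfl⟩
  have hmt : -t ≤ 0 := neg_nonpos.2 ht
  have hintIic : IntegrableOn (discountedIntegrand L lam x g) (Iic (-t)) :=
    hint.mono_set (Iic_subset_Iic.2 hmt)
  refine ⟨_, ⟨g, hg t, (intervalIntegrable_iff_integrableOn_Ioc_of_le hmt).2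
    (hint.mono_set Ioc_subset_Iic_self), rfl⟩, ?_⟩
  have hsplit := intervalIntegral.integral_Iic_sub_Iic hintIic hint
  have htail : -(M / lam * Real.exp (-(lam * t))) ≤
      ∫ τ in Iic (-t), discountedIntegrand L lam x g τ := by
    have := neg_div_le_setIntegral_of_neg_mul_exp_le hlam hM subset_rfl hintIic
      (neg_mul_exp_le_discountedIntegrand hLlb x g)
    rwa [mul_neg, mul_div_right_comm] at this
  have hψ' := mul_le_mul_of_nonneg_left (hψ (curveFrom x g (-t)))
    (Real.exp_pos (-(lam * t))).le
  linarith

theorem exists_uminusValues_le (hlam : 0 < lam) (hL0 : ∀ y, L y 0 ≤ M)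
    {ψ : V n → ℝ} (hψ : ∀ y, -M ≤ ψ y) {t : ℝ} (ht : 0 ≤ t) (x : V n) :
    ∀ a ∈ laxValues L lam ψ t x, ∃ b ∈ uminusValues L lam x,
      b ≤ a + (M + M / lam) * Real.exp (-(lam * t)) := by
  rintro _ ⟨g, hg, hint, rfl⟩
  have hmt : -t ≤ 0 := neg_nonpos.2 ht
  set g' := (Ioc (-t) 0).indicator g
  have htail : EqOn (discountedIntegrand L lam x g')
      (fun τ => Real.exp (lam * τ) * L (curveFrom x g (-t)) 0) (Iic (-t)) :=
    fun τ hτ => discountedIntegrand_indicator_Ioc_of_le ht hτ x g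
  have hmid : EqOn (discountedIntegrand L lam x g') (discountedIntegrand L lam x g)
      (Ioc (-t) 0) :=
    fun τ hτ => discountedIntegrand_indicator_Ioc_of_mem hτ x g
  have hintIoc := (intervalIntegrable_iff_integrableOn_Ioc_of_le hmt).1 hint
  have hintTail : IntegrableOn (discountedIntegrand L lam x g') (Iic (-t)) :=
    IntegrableOn.congr_fun ((integrableOn_exp_mul_Iic hlam _).mul_const _) htail.symm
      measurableSet_Iic
  have hint' : IntegrableOn (discountedIntegrand L lam x g') (Iic 0) := by
    rw [← Iic_union_Ioc_eq_Iic hmt]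
    exact hintTail.union (hintIoc.congr_fun hmid.symm measurableSet_Ioc)
  have hg' : Integrable g' :=
    (integrable_indicator_iff measurableSet_Ioc).2
      ((intervalIntegrable_iff_integrableOn_Ioc_of_le hmt).1 hg)
  refine ⟨_, ⟨g', fun _ => hg'.intervalIntegrable, hint', rfl⟩, ?_⟩
  have hsplit := intervalIntegral.integral_Iic_sub_Iic hintTail hint'
  have hsame : ∫ τ in (-t)..0, discountedIntegrand L lam x g' τ =
      ∫ τ in (-t)..0, discountedIntegrand L lam x g τ := by
    simp only [intervalIntegral.integral_of_le hmt]
    exact setIntegral_congr_fun measurableSet_Ioc hmid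
  have htailInt : ∫ τ in Iic (-t), discountedIntegrand L lam x g' τ ≤
      M / lam * Real.exp (-(lam * t)) := by
    rw [setIntegral_congr_fun measurableSet_Iic htail, MeasureTheory.integral_mul_const,
      integral_exp_mul_Iic hlam, mul_neg]
    exact (mul_le_mul_of_nonneg_left (hL0 _) (by positivity)).trans_eq (by ring)
  have hψ' := mul_le_mul_of_nonneg_left (hψ (curveFrom x g (-t)))
    (Real.exp_pos (-(lam * t))).le
  linarith

end Discounted

/-- (`C⁰`-convergence with exponential rate.)  For a Tonelli Lagrangian
`L` on `𝕋ⁿ`, `λ > 0` and `ψ ∈ C(𝕋ⁿ,ℝ)`, there is a constant `C₁` such that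
`‖U_ψ(·,t) - u⁻‖_∞ ≤ C₁ e^{-λt}` for all `t ≥ 1`; in particular `T_t⁻ψ → u⁻`
uniformly with exponential rate `λ`. -/
theorem stmt6 {n : ℕ} (lam : ℝ) (hlam : 0 < lam)
    (L : V n → V n → ℝ)
    (hL : ContDiff ℝ 2 (Function.uncurry L))
    (hconv : ∀ x : V n, StrictConvexOn ℝ Set.univ (L x))
    (hsuper : ∀ (x : V n) (C : ℝ), ∃ R : ℝ, ∀ v : V n, R ≤ ‖v‖ → C * ‖v‖ ≤ L x v)
    (hLper : ∀ (x v : V n) (m : Fin n → ℤ), L (x + intVec m) v = L x v)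
    (ψ : V n → ℝ) (hψ : Continuous ψ)
    (hψper : ∀ (x : V n) (m : Fin n → ℤ), ψ (x + intVec m) = ψ x) :
    ∃ C₁ : ℝ, 0 < C₁ ∧ ∀ t : ℝ, 1 ≤ t → ∀ x : V n,
      |lax L lam ψ t x - uminus L lam x| ≤ C₁ * Real.exp (-(lam * t)) := by
  obtain ⟨m, hm⟩ := IntPeriodic.exists_forall_le_of_convexOn
    (fun x k => funext fun v => hLper x v k) hL.continuous (fun x => (hconv x).convexOn)
    (fun x => by simpa using hsuper x 1)
  obtain ⟨K, hK⟩ := IntPeriodic.exists_abs_le (f := fun y => L y 0) (fun x k => hLper x 0 k)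
    (hL.continuous.comp (continuous_id.prodMk continuous_const))
  obtain ⟨Kψ, hKψ⟩ := IntPeriodic.exists_abs_le hψper hψ
  set M := max 1 (max (-m) (max K Kψ))
  have hM : 0 < M := zero_lt_one.trans_le (le_max_left _ _)
  have hmM : -m ≤ M := by simp [M]
  have hKM : K ≤ M := by simp [M]
  have hKψM : Kψ ≤ M := by simp [M]
  have hLlb : ∀ y v, -M ≤ L y v := fun y v => by linarith [hm y v]
  have hL0 : ∀ y, L y 0 ≤ M := fun y => by linarith [le_abs_self (L y 0), hK y]
  have hψlo : ∀ y, -M ≤ ψ y := fun y => by linarith [neg_abs_le (ψ y), hKψ y]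
  have hψhi : ∀ y, ψ y ≤ M := fun y => by linarith [le_abs_self (ψ y), hKψ y]
  refine ⟨M + M / lam, by positivity, fun t ht x => ?_⟩
  have ht0 : 0 ≤ t := zero_le_one.trans ht
  rw [lax_eq_sInf_laxValues, uminus_eq_sInf_uminusValues, abs_sub_le_iff, sub_le_iff_le_add',
    sub_le_iff_le_add']
  exact ⟨csInf_le_csInf_add_of_forall_exists_le (uminusValues_nonempty hlam x)
      (bddBelow_laxValues hlam hM.le hLlb hψlo ht0 x)
      (exists_laxValues_le hlam hM.le hLlb hψhi ht0 x),
    csInf_le_csInf_add_of_forall_exists_le (laxValues_nonempty ψ t x)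
      (bddBelow_uminusValues hlam hM.le hLlb x) (exists_uminusValues_le hlam hL0 hψlo ht0 x)⟩
end
end

section
/- Let L : 𝕋ⁿ × ℝⁿ → ℝ be continuous with L(x,v) ≥ k|v| - l for constants k > 0, l ≥ 0, and λ > 0. Suppose γ : [-σ,0] → 𝕋ⁿ with 1/2 ≤ σ ≤ 1 is a curve whose discounted action ∫_{-σ}^0 e^{λτ} L(γ,γ̇)dτ is at most C ∫_{-σ}^0 e^{λτ}dτ, where C bounds L(x,v) for |v| ≤ diam(𝕋ⁿ). Then ∫_{-σ}^0 |γ̇(τ)| dτ ≤ ((l + C)/(k λ)) e^{λσ}(e^{λσ} - 1), and in particular there exists t′ ∈ [-σ,0] with |γ̇(t′)| ≤ ((l+C)/(kλ)) · (e^{λσ}-1)/σ. -/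
/-!
Bounding `L` below by `k‖v‖ - l` turns the action bound into
`k ∫ e^{λτ} ‖γ̇‖ ≤ (l + C) ∫ e^{λτ} = (l + C) (1 - e^{-λσ}) / λ`. Since `e^{λσ} e^{λτ} ≥ 1` on
`[-σ, 0]`, this gives `∫ ‖γ̇‖ ≤ ((l + C) / (kλ)) (e^{λσ} - 1)`, which is the first claim without
its extra factor `e^{λσ} ≥ 1`. The point `t'` is one where `‖γ̇‖` is at most its mean.
-/

open MeasureTheory Set Filter Topology intervalIntegral

noncomputable section

theorem integral_exp_mul_neg_zero {lam : ℝ} (hlam : lam ≠ 0) (σ : ℝ) :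
    ∫ τ in (-σ)..0, Real.exp (lam * τ) = (1 - Real.exp (-(lam * σ))) / lam := by
  rw [integral_comp_mul_left (fun τ => Real.exp τ) hlam, integral_exp]
  simp [div_eq_inv_mul]

theorem intervalIntegral_mul_le_of_le_affine {a b k l C : ℝ} {w f A : ℝ → ℝ} (hab : a ≤ b)
    (hw : ∀ τ ∈ Icc a b, 0 ≤ w τ) (hfA : ∀ τ ∈ Icc a b, k * f τ - l ≤ A τ)
    (hwf : IntervalIntegrable (fun τ => w τ * f τ) volume a b)
    (hwi : IntervalIntegrable w volume a b)
    (hwA : IntervalIntegrable (fun τ => w τ * A τ) volume a b)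
    (hA : ∫ τ in a..b, w τ * A τ ≤ C * ∫ τ in a..b, w τ) :
    k * ∫ τ in a..b, w τ * f τ ≤ (l + C) * ∫ τ in a..b, w τ := by
  have hlow : k * (∫ τ in a..b, w τ * f τ) - l * ∫ τ in a..b, w τ ≤ ∫ τ in a..b, w τ * A τ := by
    rw [← intervalIntegral.integral_const_mul, ← intervalIntegral.integral_const_mul,
      ← integral_sub (hwf.const_mul k) (hwi.const_mul l)]
    refine integral_mono_on hab ((hwf.const_mul k).sub (hwi.const_mul l)) hwA fun τ hτ => ?_
    have := mul_le_mul_of_nonneg_left (hfA τ hτ) (hw τ hτ)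
    linarith
  linarith

theorem intervalIntegral_le_exp_mul_integral_exp_mul {lam σ : ℝ} (hlam : 0 ≤ lam) (hσ : 0 ≤ σ)
    {f : ℝ → ℝ} (hf : ∀ τ, 0 ≤ f τ) (hfi : IntervalIntegrable f volume (-σ) 0) :
    ∫ τ in (-σ)..0, f τ ≤ Real.exp (lam * σ) * ∫ τ in (-σ)..0, Real.exp (lam * τ) * f τ := by
  rw [← intervalIntegral.integral_const_mul]
  refine integral_mono_on (by linarith) hfi ((hfi.continuousOn_mul (by fun_prop)).const_mul _)
    fun τ hτ => ?_
  have : 1 ≤ Real.exp (lam * σ) * Real.exp (lam * τ) := by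
    rw [← Real.exp_add]; exact Real.one_le_exp (by nlinarith [hτ.1])
  nlinarith [hf τ]

theorem intervalIntegral_le_of_discounted_action_le {lam k l C σ : ℝ} (hlam : 0 < lam)
    (hk : 0 < k) (hσ : 0 ≤ σ) {f A : ℝ → ℝ} (hf : ∀ τ, 0 ≤ f τ) (hfA : ∀ τ, k * f τ - l ≤ A τ)
    (hfi : IntervalIntegrable f volume (-σ) 0)
    (hAi : IntervalIntegrable (fun τ => Real.exp (lam * τ) * A τ) volume (-σ) 0)
    (hA : ∫ τ in (-σ)..0, Real.exp (lam * τ) * A τ ≤ C * ∫ τ in (-σ)..0, Real.exp (lam * τ)) :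
    ∫ τ in (-σ)..0, f τ ≤ (l + C) / (k * lam) * (Real.exp (lam * σ) - 1) := by
  have hweighted : k * ∫ τ in (-σ)..0, Real.exp (lam * τ) * f τ
      ≤ (l + C) * ∫ τ in (-σ)..0, Real.exp (lam * τ) :=
    intervalIntegral_mul_le_of_le_affine (by linarith) (fun τ _ => (Real.exp_pos _).le)
      (fun τ _ => hfA τ) (hfi.continuousOn_mul (by fun_prop))
      (Continuous.intervalIntegrable (by fun_prop) _ _) hAi hA
  calc ∫ τ in (-σ)..0, f τ
      ≤ Real.exp (lam * σ) * ∫ τ in (-σ)..0, Real.exp (lam * τ) * f τ :=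
        intervalIntegral_le_exp_mul_integral_exp_mul hlam.le hσ hf hfi
    _ ≤ Real.exp (lam * σ) * ((l + C) * ∫ τ in (-σ)..0, Real.exp (lam * τ)) / k := by
        rw [mul_div_assoc]
        gcongr
        rwa [le_div_iff₀' hk]
    _ = (l + C) / (k * lam) * (Real.exp (lam * σ) - 1) := by
        rw [integral_exp_mul_neg_zero hlam.ne', Real.exp_neg]
        field_simp

theorem exists_le_intervalIntegral_div {f : ℝ → ℝ} {a b : ℝ} (hab : a < b)
    (hf : IntervalIntegrable f volume a b) :
    ∃ t ∈ Icc a b, f t ≤ (∫ x in a..b, f x) / (b - a) := by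
  have hvol : volume (uIoc a b) ≠ 0 := by simp [uIoc_of_le hab.le, hab]
  obtain ⟨t, ht, hle⟩ := exists_le_setAverage hvol measure_Ioc_lt_top.ne hf.def'
  rw [uIoc_of_le hab.le] at ht
  exact ⟨t, Ioc_subset_Icc_self ht, hle.trans_eq (interval_average_eq_div f a b)⟩

theorem stmt7_general {n : ℕ} (lam k l C σ : ℝ)
    (hlam : 0 < lam) (hk : 0 < k)
    (hσ₁ : 1/2 ≤ σ)
    (L : V n → V n → ℝ)
    (hLlow : ∀ (x v : V n), k * ‖v‖ - l ≤ L x v)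
    (x : V n) (g : ℝ → V n)
    (hgn : IntervalIntegrable (fun τ => ‖g τ‖) volume (-σ) 0)
    (hact : IntervalIntegrable
      (fun τ => Real.exp (lam * τ) * L (curveFrom x g τ) (g τ)) volume (-σ) 0)
    (hsmall : (∫ τ in (-σ)..0, Real.exp (lam * τ) * L (curveFrom x g τ) (g τ))
        ≤ C * ∫ τ in (-σ)..0, Real.exp (lam * τ)) :
    (∫ τ in (-σ)..0, ‖g τ‖)
        ≤ (l + C) / (k * lam) * Real.exp (lam * σ) * (Real.exp (lam * σ) - 1) ∧
    ∃ t' ∈ Set.Icc (-σ) (0:ℝ),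
      ‖g t'‖ ≤ (l + C) / (k * lam) * ((Real.exp (lam * σ) - 1) / σ) := by
  have hσ : 0 < σ := by linarith
  have hspeed : ∫ τ in (-σ)..0, ‖g τ‖ ≤ (l + C) / (k * lam) * (Real.exp (lam * σ) - 1) :=
    intervalIntegral_le_of_discounted_action_le hlam hk hσ.le (fun τ => norm_nonneg (g τ))
      (fun τ => hLlow _ _) hgn hact hsmall
  have hbound_nonneg : 0 ≤ (l + C) / (k * lam) * (Real.exp (lam * σ) - 1) :=
    (intervalIntegral.integral_nonneg (by linarith) fun τ _ => norm_nonneg (g τ)).trans hspeed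
  constructor
  · calc ∫ τ in (-σ)..0, ‖g τ‖
        ≤ (l + C) / (k * lam) * (Real.exp (lam * σ) - 1) := hspeed
      _ ≤ Real.exp (lam * σ) * ((l + C) / (k * lam) * (Real.exp (lam * σ) - 1)) :=
          le_mul_of_one_le_left hbound_nonneg (Real.one_le_exp (by positivity))
      _ = _ := by ring
  · obtain ⟨t, ht, hle⟩ := exists_le_intervalIntegral_div (neg_lt_zero.2 hσ) hgn
    refine ⟨t, ht, hle.trans ?_⟩
    rw [sub_neg_eq_add, zero_add, ← mul_div_assoc]
    exact div_le_div_of_nonneg_right hspeed hσ.le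

/-- (A priori compactness estimate.)  Let `L` be continuous with
`L(x,v) ≥ k‖v‖ - l` (`k > 0`, `l ≥ 0`) and `λ > 0`.  If `γ : [-σ,0] → 𝕋ⁿ`
(with `1/2 ≤ σ ≤ 1`) has discounted action `∫_{-σ}^0 e^{λτ} L(γ,γ̇) dτ ≤ C ∫_{-σ}^0 e^{λτ} dτ`,
where `C` bounds `L(x,v)` for `‖v‖ ≤ diam 𝕋ⁿ = √n`, then
`∫_{-σ}^0 ‖γ̇‖ ≤ ((l+C)/(kλ)) e^{λσ}(e^{λσ}-1)`, and there is `t' ∈ [-σ,0]` with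
`‖γ̇(t')‖ ≤ ((l+C)/(kλ)) (e^{λσ}-1)/σ`. -/
theorem stmt7 {n : ℕ} (lam k l C σ : ℝ)
    (hlam : 0 < lam) (hk : 0 < k) (hl : 0 ≤ l)
    (hσ₁ : 1/2 ≤ σ) (hσ₂ : σ ≤ 1)
    (L : V n → V n → ℝ) (hL : Continuous (Function.uncurry L))
    (hLlow : ∀ (x v : V n), k * ‖v‖ - l ≤ L x v)
    (hC : ∀ (x v : V n), ‖v‖ ≤ Real.sqrt n → L x v ≤ C)
    (x : V n) (g : ℝ → V n)
    (hg : IntervalIntegrable g volume (-σ) 0)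
    (hgn : IntervalIntegrable (fun τ => ‖g τ‖) volume (-σ) 0)
    (hact : IntervalIntegrable
      (fun τ => Real.exp (lam * τ) * L (curveFrom x g τ) (g τ)) volume (-σ) 0)
    (hsmall : (∫ τ in (-σ)..0, Real.exp (lam * τ) * L (curveFrom x g τ) (g τ))
        ≤ C * ∫ τ in (-σ)..0, Real.exp (lam * τ)) :
    (∫ τ in (-σ)..0, ‖g τ‖)
        ≤ (l + C) / (k * lam) * Real.exp (lam * σ) * (Real.exp (lam * σ) - 1) ∧
    ∃ t' ∈ Set.Icc (-σ) (0:ℝ),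
      ‖g t'‖ ≤ (l + C) / (k * lam) * ((Real.exp (lam * σ) - 1) / σ) :=
  stmt7_general lam k l C σ hlam hk hσ₁ L hLlow x g hgn hact hsmall
end
end
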